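/- Suppose u is a classical solution on [0,T] × ℝⁿ, periodic in x, of u_t(t,x) = p.v. ∫_{ℝⁿ} (u(t,y) − u(t,x)) u(t,y) |x−y|^{−n−1} dy, and suppose 0 < m₀ ≤ u(0,x) ≤ M₀ for all x. Then m₀ ≤ u(t,x) ≤ M₀ for all t ∈ [0,T] and x ∈ ℝⁿ. -/

import Mathlib

/-!
Compare the spatial maximum of `u` with the barrier `M₀ + δ (1 + t)`. By periodicity the maximum
is taken over a compact cell, so it is continuous in time. At the first time it touches the barrier
the touching point `x₀` is a spatial maximum, where the nonlocal term is `≤ 0` because `u > 0`;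
yet `u(·, x₀)` meets the barrier from below, so its time derivative is at least `δ > 0`. Letting
`δ → 0` gives the upper bound. The lower bound is the same argument applied to `-u`, and is proved
first, since the positivity it provides is what the upper bound needs.
-/

open MeasureTheory Filter Set Topology

theorem HasDerivAt.le_of_le_left_of_eq {f g : ℝ → ℝ} {f' g' a b : ℝ} (hf : HasDerivAt f f' b)
    (hg : HasDerivAt g g' b) (hab : a < b) (hle : ∀ s ∈ Ico a b, f s ≤ g s) (heq : f b = g b) :
    g' ≤ f' := by
  have hslope := (hasDerivWithinAt_iff_tendsto_slope' (s := Iio b) (lt_irrefl b)).1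
    ((hf.sub hg).hasDerivWithinAt)
  refine sub_nonneg.1 (ge_of_tendsto hslope ?_)
  filter_upwards [Ioo_mem_nhdsLT hab] with s hs
  rw [slope_def_field, Pi.sub_apply, Pi.sub_apply]
  exact div_nonneg_of_nonpos (by linarith [hle s ⟨hs.1.le, hs.2⟩]) (by linarith [hs.2])

theorem exists_first_zero_of_neg_of_nonneg {φ : ℝ → ℝ} {a b : ℝ} (hφ : ContinuousOn φ (Icc a b))
    (hab : a ≤ b) (ha : φ a < 0) (hb : 0 ≤ φ b) :
    ∃ c ∈ Ioc a b, φ c = 0 ∧ ∀ s ∈ Ico a c, φ s < 0 := by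
  set S := Icc a b ∩ φ ⁻¹' Ici 0
  have hS : IsCompact S :=
    isCompact_Icc.of_isClosed_subset (hφ.preimage_isClosed_of_isClosed isClosed_Icc isClosed_Ici)
      inter_subset_left
  obtain ⟨⟨hac, hcb⟩, hc⟩ : sInf S ∈ S := hS.sInf_mem ⟨b, ⟨hab, le_rfl⟩, hb⟩
  have hac' : a < sInf S := hac.lt_of_ne fun h => not_le.2 ha (h ▸ hc)
  have hbefore : ∀ s ∈ Ico a (sInf S), φ s < 0 := fun s hs => not_le.1 fun hs' =>
    (csInf_le hS.bddBelow ⟨⟨hs.1, hs.2.le.trans hcb⟩, hs'⟩).not_gt hs.2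
  refine ⟨sInf S, ⟨hac', hcb⟩, le_antisymm ?_ hc, hbefore⟩
  refine ContinuousWithinAt.closure_le (s := Ico a (sInf S)) ?_ ?_ continuousWithinAt_const
    fun s hs => (hbefore s hs).le
  · rw [closure_Ico hac'.ne]
    exact right_mem_Icc.2 hac'.le
  · exact (hφ.continuousWithinAt ⟨hac, hcb⟩).mono fun s hs => ⟨hs.1, hs.2.le.trans hcb⟩

theorem exists_continuous_isGreatest_range {α X : Type*} [TopologicalSpace α] [TopologicalSpace X]
    {v : α → X → ℝ} (hv : Continuous ↿v) {K : Set X} (hK : IsCompact K) (hKne : K.Nonempty)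
    (hrange : ∀ a x, ∃ y ∈ K, v a y = v a x) :
    ∃ M : α → ℝ, Continuous M ∧ ∀ a, IsGreatest (range (v a)) (M a) := by
  have hKa : ∀ a, IsCompact (v a '' K) := fun a => hK.image (hv.comp (.prodMk_right a))
  refine ⟨fun a => sSup (v a '' K), hK.continuous_sSup hv, fun a =>
    ⟨image_subset_range _ _ ((hKa a).sSup_mem (hKne.image _)), ?_⟩⟩
  rintro _ ⟨x, rfl⟩
  obtain ⟨y, hyK, hy⟩ := hrange a x
  exact hy ▸ le_csSup (hKa a).bddAbove (mem_image_of_mem _ hyK)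

section MaxPrinciple

variable {X : Type*} [TopologicalSpace X] {v G : ℝ → X → ℝ} {K : Set X} {T c M₀ : ℝ}

theorem le_add_mul_of_deriv_nonpos_at_max (hv : Continuous ↿v) (hK : IsCompact K)
    (hKne : K.Nonempty) (hrange : ∀ t x, ∃ y ∈ K, v t y = v t x)
    (hderiv : ∀ x, ∀ t ∈ Icc 0 T, HasDerivAt (v · x) (G t x) t)
    (hsign : ∀ t ∈ Ioc 0 T, ∀ x, (∀ y, v t y ≤ v t x) → v t x < c → G t x ≤ 0)
    (hinit : ∀ x, v 0 x ≤ M₀) {δ : ℝ} (hδ : 0 < δ) (hδc : M₀ + δ * (1 + T) < c) :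
    ∀ t ∈ Icc 0 T, ∀ x, v t x ≤ M₀ + δ * (1 + t) := by
  intro t₁ ht₁ x₁
  by_contra! hviol
  obtain ⟨M, hMcont, hMmax⟩ := exists_continuous_isGreatest_range hv hK hKne hrange
  obtain ⟨t₀, ⟨ht₀, ht₀t₁⟩, htouch, hbelow⟩ :=
    exists_first_zero_of_neg_of_nonneg (φ := fun t => M t - (M₀ + δ * (1 + t)))
      (by fun_prop) ht₁.1
      (by obtain ⟨x, hx⟩ := (hMmax 0).1; linarith [hinit x])
      (by linarith [(hMmax t₁).2 ⟨x₁, rfl⟩])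
  have ht₀T : t₀ ∈ Icc 0 T := ⟨ht₀.le, ht₀t₁.trans ht₁.2⟩
  obtain ⟨x₀, hx₀⟩ := (hMmax t₀).1
  have hG : G t₀ x₀ ≤ 0 := by
    refine hsign t₀ ⟨ht₀, ht₀T.2⟩ x₀ (fun y => hx₀ ▸ (hMmax t₀).2 ⟨y, rfl⟩) ?_
    nlinarith [ht₀T.2]
  have hδG : δ ≤ G t₀ x₀ := by
    refine (hderiv x₀ t₀ ht₀T).le_of_le_left_of_eq (g := fun t => M₀ + δ * (1 + t))
      (by simpa using ((hasDerivAt_id t₀).const_add 1).const_mul δ |>.const_add M₀) ht₀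
      (fun s hs => ?_) (by linarith)
    linarith [(hMmax s).2 ⟨x₀, rfl⟩, hbelow s hs]
  linarith

theorem le_of_deriv_nonpos_at_max (hv : Continuous ↿v) (hK : IsCompact K)
    (hKne : K.Nonempty) (hrange : ∀ t x, ∃ y ∈ K, v t y = v t x)
    (hderiv : ∀ x, ∀ t ∈ Icc 0 T, HasDerivAt (v · x) (G t x) t)
    (hsign : ∀ t ∈ Ioc 0 T, ∀ x, (∀ y, v t y ≤ v t x) → v t x < c → G t x ≤ 0)
    (hM₀c : M₀ < c) (hinit : ∀ x, v 0 x ≤ M₀) :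
    ∀ t ∈ Icc 0 T, ∀ x, v t x ≤ M₀ := by
  intro t ht x
  have hT : 0 < 1 + T := by linarith [ht.1, ht.2]
  have hlim : Tendsto (fun δ : ℝ => M₀ + δ * (1 + t)) (𝓝[>] 0) (𝓝 M₀) := by
    simpa using ((continuous_id.mul continuous_const).const_add M₀).tendsto' 0 M₀ (by simp)
      |>.mono_left nhdsWithin_le_nhds
  refine ge_of_tendsto hlim ?_
  filter_upwards [Ioo_mem_nhdsGT (div_pos (sub_pos.2 hM₀c) hT)] with δ ⟨hδ, hδc⟩
  rw [lt_div_iff₀ hT] at hδc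
  exact le_add_mul_of_deriv_nonpos_at_max hv hK hKne hrange hderiv hsign hinit hδ
    (by linarith) t ht x

end MaxPrinciple

section Truncation

variable {E : Type*} [MeasurableSpace E] {μ : Measure E} {w k : E → ℝ} {x : E} {S : ℝ → Set E}
  {l : Filter ℝ} [l.NeBot] {F : ℝ}

theorem nonpos_of_tendsto_setIntegral_of_isMax (hmax : ∀ y, w y ≤ w x) (hw : ∀ y, 0 ≤ w y)
    (hk : ∀ y, 0 ≤ k y)
    (hF : Tendsto (fun ε => ∫ y in S ε, (w y - w x) * w y * k y ∂μ) l (𝓝 F)) : F ≤ 0 :=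
  le_of_tendsto' hF fun _ => integral_nonpos fun y =>
    mul_nonpos_of_nonpos_of_nonneg
      (mul_nonpos_of_nonpos_of_nonneg (sub_nonpos.2 (hmax y)) (hw y)) (hk y)

theorem nonneg_of_tendsto_setIntegral_of_isMin (hmin : ∀ y, w x ≤ w y) (hw : 0 ≤ w x)
    (hk : ∀ y, 0 ≤ k y)
    (hF : Tendsto (fun ε => ∫ y in S ε, (w y - w x) * w y * k y ∂μ) l (𝓝 F)) : 0 ≤ F :=
  ge_of_tendsto' hF fun _ => integral_nonneg fun y =>
    mul_nonneg (mul_nonneg (sub_nonneg.2 (hmin y)) (hw.trans (hmin y))) (hk y)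

end Truncation

theorem EuclideanSpace.isCompact_setOf_forall_mem_Icc {ι : Type*} (a b : ℝ) :
    IsCompact {y : EuclideanSpace ℝ ι | ∀ i, y i ∈ Icc a b} := by
  convert (EuclideanSpace.equiv ι ℝ).toHomeomorph.isCompact_preimage.2
    (isCompact_univ_pi fun _ => isCompact_Icc (a := a) (b := b)) using 1
  ext y
  simp only [mem_preimage, mem_univ_pi]
  rfl

theorem exists_forall_mem_Icc_apply_eq_of_periodic {ι α : Type*} [Fintype ι] [DecidableEq ι]
    {f : EuclideanSpace ℝ ι → α} {L : ℝ} (hL : 0 < L)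
    (hf : ∀ i, Function.Periodic f (L • EuclideanSpace.single i (1 : ℝ)))
    (x : EuclideanSpace ℝ ι) : ∃ y, (∀ i, y i ∈ Icc 0 L) ∧ f y = f x := by
  set k : ι → ℤ := fun i => toIcoDiv hL 0 (x i)
  refine ⟨x - ∑ i, k i • L • EuclideanSpace.single i (1 : ℝ), fun j => ?_, ?_⟩
  · have hj : (x - ∑ i, k i • L • EuclideanSpace.single i (1 : ℝ)) j = toIcoMod hL 0 (x j) := by
      rw [← self_sub_toIcoDiv_zsmul]
      simp [k, Pi.single_apply, zsmul_eq_mul, mul_comm]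
    exact hj ▸ Ico_subset_Icc_self (toIcoMod_mem_Ico' hL (x j))
  · refine Function.Periodic.sub_eq ?_ x
    exact Finset.sum_induction _ _ (fun _ _ => Function.Periodic.add_period) (fun _ => by simp)
      fun i _ => (hf i).zsmul (k i)

theorem nonlocal_burgers_max_principle_general (n : ℕ) (T L m₀ M₀ : ℝ)
    (hL : 0 < L) (hm₀ : 0 < m₀)
    (u : ℝ → EuclideanSpace ℝ (Fin n) → ℝ)
    (F : ℝ → EuclideanSpace ℝ (Fin n) → ℝ)
    (hcont : Continuous fun p : ℝ × EuclideanSpace ℝ (Fin n) => u p.1 p.2)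
    (hper : ∀ (t : ℝ) (x : EuclideanSpace ℝ (Fin n)) (i : Fin n),
      u t (x + L • EuclideanSpace.single i (1:ℝ)) = u t x)
    (hpv : ∀ t ∈ Set.Icc 0 T, ∀ x : EuclideanSpace ℝ (Fin n),
      Tendsto (fun ε : ℝ =>
          ∫ y in {y : EuclideanSpace ℝ (Fin n) | ε ≤ ‖y - x‖},
            (u t y - u t x) * u t y * ‖x - y‖ ^ (-(n:ℝ) - 1))
        (nhdsWithin 0 (Set.Ioi 0)) (nhds (F t x)))
    (hderiv : ∀ (x : EuclideanSpace ℝ (Fin n)), ∀ t ∈ Set.Icc 0 T,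
      HasDerivAt (fun s => u s x) (F t x) t)
    (hinit : ∀ x, m₀ ≤ u 0 x ∧ u 0 x ≤ M₀) :
    ∀ t ∈ Set.Icc 0 T, ∀ x, m₀ ≤ u t x ∧ u t x ≤ M₀ := by
  set K := {y : EuclideanSpace ℝ (Fin n) | ∀ i, y i ∈ Icc 0 L}
  have hK : IsCompact K := EuclideanSpace.isCompact_setOf_forall_mem_Icc 0 L
  have hKne : K.Nonempty := ⟨0, fun _ => by simp [hL.le]⟩
  have hrange : ∀ t x, ∃ y ∈ K, u t y = u t x := fun t =>
    exists_forall_mem_Icc_apply_eq_of_periodic hL fun i y => hper t y i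
  have hkernel : ∀ x y : EuclideanSpace ℝ (Fin n), 0 ≤ ‖x - y‖ ^ (-(n:ℝ) - 1) :=
    fun _ _ => Real.rpow_nonneg (norm_nonneg _) _
  have hlower : ∀ t ∈ Icc 0 T, ∀ x, m₀ ≤ u t x := by
    have := le_of_deriv_nonpos_at_max (v := fun t x => -u t x) (G := fun t x => -F t x)
      (c := 0) (M₀ := -m₀) hcont.neg hK hKne
      (fun t x => (hrange t x).imp fun y hy => ⟨hy.1, congrArg Neg.neg hy.2⟩)
      (fun x t ht => (hderiv x t ht).neg)
      (fun t ht x hmax hneg => neg_nonpos.2 <| nonneg_of_tendsto_setIntegral_of_isMin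
        (fun y => neg_le_neg_iff.1 (hmax y)) (by linarith) (hkernel x) (hpv t ⟨ht.1.le, ht.2⟩ x))
      (neg_lt_zero.2 hm₀) (fun x => neg_le_neg (hinit x).1)
    exact fun t ht x => neg_le_neg_iff.1 (this t ht x)
  refine fun t ht x => ⟨hlower t ht x, le_of_deriv_nonpos_at_max hcont hK hKne hrange hderiv
    (c := M₀ + 1) (fun t ht x hmax _ => ?_) (lt_add_one M₀) (fun x => (hinit x).2) t ht x⟩
  have ht' : t ∈ Icc 0 T := ⟨ht.1.le, ht.2⟩
  exact nonpos_of_tendsto_setIntegral_of_isMax hmax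
    (fun y => hm₀.le.trans (hlower t ht' y)) (hkernel x) (hpv t ht' x)

/-- Maximum/minimum principle for the nonlocal Burgers equation: if `u` is a continuous,
spatially periodic classical solution on `[0,T] × ℝⁿ` of
`u_t(t,x) = p.v. ∫ (u(t,y) - u(t,x)) u(t,y) |x - y|^{-n-1} dy`
with `0 < m₀ ≤ u(0,·) ≤ M₀`, then `m₀ ≤ u(t,·) ≤ M₀` for all `t ∈ [0,T]`. -/
theorem nonlocal_burgers_max_principle (n : ℕ) (hn : 1 ≤ n) (T L m₀ M₀ : ℝ)
    (hT : 0 < T) (hL : 0 < L) (hm₀ : 0 < m₀) (hm₀M₀ : m₀ ≤ M₀)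
    (u : ℝ → EuclideanSpace ℝ (Fin n) → ℝ)
    (F : ℝ → EuclideanSpace ℝ (Fin n) → ℝ)
    (hcont : Continuous fun p : ℝ × EuclideanSpace ℝ (Fin n) => u p.1 p.2)
    (hper : ∀ (t : ℝ) (x : EuclideanSpace ℝ (Fin n)) (i : Fin n),
      u t (x + L • EuclideanSpace.single i (1:ℝ)) = u t x)
    (hpv : ∀ t ∈ Set.Icc 0 T, ∀ x : EuclideanSpace ℝ (Fin n),
      Tendsto (fun ε : ℝ =>
          ∫ y in {y : EuclideanSpace ℝ (Fin n) | ε ≤ ‖y - x‖},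
            (u t y - u t x) * u t y * ‖x - y‖ ^ (-(n:ℝ) - 1))
        (nhdsWithin 0 (Set.Ioi 0)) (nhds (F t x)))
    (hderiv : ∀ (x : EuclideanSpace ℝ (Fin n)), ∀ t ∈ Set.Icc 0 T,
      HasDerivAt (fun s => u s x) (F t x) t)
    (hinit : ∀ x, m₀ ≤ u 0 x ∧ u 0 x ≤ M₀) :
    ∀ t ∈ Set.Icc 0 T, ∀ x, m₀ ≤ u t x ∧ u t x ≤ M₀ :=
  nonlocal_burgers_max_principle_general n T L m₀ M₀ hL hm₀ u F hcont hper hpv hderiv hinit
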